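/- arXiv:2311.06029 — 2 statements merged into one kernel-verified Lean document; each statement's English description precedes it below -/
import Mathlib

section
/- Optimality condition sufficiency: let A₀,…,A_{n−1} be Hermitian operators on a finite-dimensional Hilbert space and {M_i}_{i=0}^{n−1} a measurement such that Σ_j A_j M_j − A_i ⪰ 0 for every i. Then {M_i} maximizes Σ_i Tr(A_i N_i) over all measurements {N_i}, i.e., Σ_i Tr(A_i M_i) ≥ Σ_i Tr(A_i N_i) for every measurement {N_i}. -/
/-!
Weak duality: `Y := ∑ⱼ Aⱼ Mⱼ` is a feasible point of the dual program. For any measurement `{Nᵢ}`,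
`∑ᵢ Tr(Aᵢ Nᵢ) = Tr Y - ∑ᵢ Tr((Y - Aᵢ) Nᵢ)`, because `∑ᵢ Nᵢ = 1`, and each `Tr((Y - Aᵢ) Nᵢ)` is
nonnegative, being the trace of a product of two positive semidefinite matrices. Finally
`Tr Y = ∑ᵢ Tr(Aᵢ Mᵢ)`.
-/

open Matrix BigOperators Finset
open scoped ComplexOrder

noncomputable def matAbs {d : Type*} [Fintype d] [DecidableEq d] (E : Matrix d d ℂ) : Matrix d d ℂ :=
  ((Matrix.posSemidef_conjTranspose_mul_self E).1.eigenvectorUnitary : Matrix d d ℂ) *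
    diagonal ((↑) ∘ (√·) ∘ (Matrix.posSemidef_conjTranspose_mul_self E).1.eigenvalues) *
    (star (Matrix.posSemidef_conjTranspose_mul_self E).1.eigenvectorUnitary : Matrix d d ℂ)

noncomputable def tpow {d : Type*} (E : Matrix d d ℂ) (L : ℕ) :
    Matrix (Fin L → d) (Fin L → d) ℂ :=
  Matrix.of fun i j => ∏ l, E (i l) (j l)

noncomputable def tfam {d : Type*} {L : ℕ} (A : Fin L → Matrix d d ℂ) :
    Matrix (Fin L → d) (Fin L → d) ℂ :=
  Matrix.of fun i j => ∏ l, A l (i l) (j l)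

def pt {a b : Type*} (M : Matrix (a × b) (a × b) ℂ) : Matrix (a × b) (a × b) ℂ :=
  Matrix.of fun x y => M (x.1, y.2) (y.1, x.2)

namespace Matrix

variable {𝕜 n : Type*} [RCLike 𝕜] [Fintype n] [DecidableEq n]

open scoped MatrixOrder in
theorem PosSemidef.trace_mul_nonneg {P Q : Matrix n n 𝕜} (hP : P.PosSemidef)
    (hQ : Q.PosSemidef) : 0 ≤ (P * Q).trace := by
  set S := CFC.sqrt Q
  have hS : Sᴴ = S := (CFC.sqrt_nonneg Q).posSemidef.isHermitian.eq
  calc (0 : 𝕜) ≤ (S * P * Sᴴ).trace := (hP.mul_mul_conjTranspose_same S).trace_nonneg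
    _ = (P * (S * S)).trace := by rw [hS, mul_assoc, trace_mul_comm, mul_assoc]
    _ = (P * Q).trace := by rw [CFC.sqrt_mul_sqrt_self Q hQ.nonneg]

theorem sum_trace_mul_le_trace_of_posSemidef_sub {ι : Type*} [Fintype ι]
    {A N : ι → Matrix n n 𝕜} {Y : Matrix n n 𝕜} (hY : ∀ i, (Y - A i).PosSemidef)
    (hN : ∀ i, (N i).PosSemidef) (hNsum : ∑ i, N i = 1) :
    ∑ i, (A i * N i).trace ≤ Y.trace := by
  have hgap : 0 ≤ ∑ i, ((Y - A i) * N i).trace :=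
    sum_nonneg fun i _ => (hY i).trace_mul_nonneg (hN i)
  have hsplit : ∑ i, ((Y - A i) * N i).trace = Y.trace - ∑ i, (A i * N i).trace := by
    simp only [sub_mul, trace_sub, sum_sub_distrib, ← trace_sum, ← mul_sum, hNsum, mul_one]
  exact sub_nonneg.mp (hsplit ▸ hgap)

end Matrix

theorem stmt_6_general {d : Type*} [Fintype d] [DecidableEq d] (n : ℕ)
    (A : Fin n → Matrix d d ℂ)
    (M : Fin n → Matrix d d ℂ)
    (hopt : ∀ i, ((∑ j, A j * M j) - A i).PosSemidef)
    (N : Fin n → Matrix d d ℂ) (hN : ∀ i, (N i).PosSemidef) (hNsum : ∑ i, N i = 1) :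
    ∑ i, ((A i * N i).trace).re ≤ ∑ i, ((A i * M i).trace).re := by
  have h := Matrix.sum_trace_mul_le_trace_of_posSemidef_sub hopt hN hNsum
  rw [trace_sum] at h
  simpa only [Complex.re_sum] using Complex.re_le_re h

/-- if `Σⱼ Aⱼ Mⱼ - Aᵢ ⪰ 0` for all `i`, then the measurement `{Mᵢ}` maximizes
`Σᵢ Tr(Aᵢ Nᵢ)` over all measurements `{Nᵢ}`. -/
theorem stmt_6 {d : Type*} [Fintype d] [DecidableEq d] (n : ℕ)
    (A : Fin n → Matrix d d ℂ) (hA : ∀ i, (A i).IsHermitian)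
    (M : Fin n → Matrix d d ℂ) (hM : ∀ i, (M i).PosSemidef) (hMsum : ∑ i, M i = 1)
    (hopt : ∀ i, ((∑ j, A j * M j) - A i).PosSemidef)
    (N : Fin n → Matrix d d ℂ) (hN : ∀ i, (N i).PosSemidef) (hNsum : ∑ i, N i = 1) :
    ∑ i, ((A i * N i).trace).re ≤ ∑ i, ((A i * M i).trace).re :=
  stmt_6_general n A M hopt N hN hNsum
end

section
/- Werner-state ensemble bound: for integers d ≥ 2, m ≥ 1, and 2^{m−1} < n ≤ 2^m, consider weights η_i = (1/N) Π_{k=1}^m [d² + (−1)^{b_k(i)} d] for i = 0,…,n−1, where b_k(i) is the k-th binary digit of i and N = Σ_{i=0}^{n−1} Π_{k=1}^m [d² + (−1)^{b_k(i)} d]. Then η₀ < (1/n)(1 + 2/(d−1))^m; in particular, if d ≥ (2^{1/m} + 1)/(2^{1/m} − 1) then η₀ < 2/n. -/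
/-! Every factor `d² ± d` of a weight is at least `d² - d`, and the factors of `wt d m 0` are all
`d² + d`. Hence `N > n (d² - d)^m` and `η₀ < (d² + d)^m / (n (d² - d)^m) = ((d + 1)/(d - 1))^m / n`.
The condition on `d` says exactly that `(d + 1)/(d - 1) ≤ 2^{1/m}`, since `x ↦ (x + 1)/(x - 1)` is
an involution of `(1, ∞)` that reverses the order. -/

open BigOperators Finset

/-- Weight `Π_{k=1}^m [d² + (-1)^{b_k(i)} d]` where `b_k(i)` is the k-th binary digit of `i`. -/
noncomputable def wt (d m : ℕ) (i : ℕ) : ℝ :=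
  ∏ k : Fin m, ((d : ℝ) ^ 2 + (-1 : ℝ) ^ (if i.testBit k.val then 1 else 0) * d)

lemma wt_zero (d m : ℕ) : wt d m 0 = ((d : ℝ) ^ 2 + d) ^ m := by
  simp [wt, Nat.zero_testBit]

lemma sq_sub_self_pow_le_wt (d m i : ℕ) : ((d : ℝ) ^ 2 - d) ^ m ≤ wt d m i := by
  have hd : (0 : ℝ) ≤ d := d.cast_nonneg
  have h0 : (0 : ℝ) ≤ (d : ℝ) ^ 2 - d := by
    rw [sub_nonneg]
    exact_mod_cast Nat.le_self_pow two_ne_zero d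
  calc ((d : ℝ) ^ 2 - d) ^ m = ∏ _k : Fin m, ((d : ℝ) ^ 2 - d) := by simp
    _ ≤ wt d m i := prod_le_prod (fun _ _ => h0) fun k _ => by split_ifs <;> linarith

lemma mul_sq_sub_self_pow_lt_sum_wt {d m n : ℕ} (hd : 1 ≤ d) (hm : m ≠ 0) (hn : 0 < n) :
    (n : ℝ) * ((d : ℝ) ^ 2 - d) ^ m < ∑ i ∈ range n, wt d m i := by
  have hd' : (1 : ℝ) ≤ d := by exact_mod_cast hd
  calc (n : ℝ) * ((d : ℝ) ^ 2 - d) ^ m = ∑ _i ∈ range n, ((d : ℝ) ^ 2 - d) ^ m := by simp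
    _ < ∑ i ∈ range n, wt d m i := ?_
  refine sum_lt_sum (fun i _ => sq_sub_self_pow_le_wt d m i) ⟨0, mem_range.mpr hn, ?_⟩
  rw [wt_zero]
  exact pow_lt_pow_left₀ (by linarith) (by nlinarith) hm

lemma wt_zero_div_sum_wt_lt {d m n : ℕ} (hd : 2 ≤ d) (hm : m ≠ 0) (hn : 0 < n) :
    wt d m 0 / ∑ i ∈ range n, wt d m i < (1 / n) * (1 + 2 / ((d : ℝ) - 1)) ^ m := by
  have hd' : (2 : ℝ) ≤ d := by exact_mod_cast hd
  have hsub : (0 : ℝ) < (d : ℝ) ^ 2 - d := by nlinarith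
  calc wt d m 0 / ∑ i ∈ range n, wt d m i
      < wt d m 0 / ((n : ℝ) * ((d : ℝ) ^ 2 - d) ^ m) := by
        refine div_lt_div_of_pos_left ?_ (by positivity)
          (mul_sq_sub_self_pow_lt_sum_wt (by omega) hm hn)
        rw [wt_zero]
        positivity
    _ = (1 / n) * (1 + 2 / ((d : ℝ) - 1)) ^ m := by
        have hd1 : (d : ℝ) - 1 ≠ 0 := by linarith
        rw [wt_zero, show (d : ℝ) ^ 2 + d = d * (d - 1) * (1 + 2 / (d - 1)) by field_simp; ring,
          show (d : ℝ) ^ 2 - d = d * (d - 1) by ring, mul_pow]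
        have : (0 : ℝ) < d * (d - 1) := by nlinarith
        field_simp

lemma one_add_two_div_sub_one_le_of_le {c x : ℝ} (hc : 1 < c) (h : (c + 1) / (c - 1) ≤ x) :
    1 + 2 / (x - 1) ≤ c := by
  have hc' : 0 < c - 1 := by linarith
  rw [div_le_iff₀ hc'] at h
  have hx : 0 < x - 1 := by nlinarith
  rw [← le_sub_iff_add_le', div_le_iff₀ hx]
  nlinarith

theorem stmt_16_general (d m n : ℕ) (hd : 2 ≤ d) (hm : 1 ≤ m)
    (hn₁ : 2 ^ (m - 1) < n) :
    wt d m 0 / (∑ i ∈ Finset.range n, wt d m i)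
        < (1 / n) * (1 + 2 / ((d : ℝ) - 1)) ^ m ∧
      ((((2 : ℝ) ^ ((1 : ℝ) / m) + 1) / ((2 : ℝ) ^ ((1 : ℝ) / m) - 1) ≤ (d : ℝ)) →
        wt d m 0 / (∑ i ∈ Finset.range n, wt d m i) < 2 / n) := by
  have hm0 : m ≠ 0 := by omega
  have hbound := wt_zero_div_sum_wt_lt hd hm0 (Nat.zero_lt_of_lt hn₁)
  refine ⟨hbound, fun hc => hbound.trans_le ?_⟩
  have hroot_gt : 1 < (2 : ℝ) ^ ((1 : ℝ) / m) :=
    Real.one_lt_rpow one_lt_two (by positivity)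
  have hpow : (1 + 2 / ((d : ℝ) - 1)) ^ m ≤ 2 := by
    calc (1 + 2 / ((d : ℝ) - 1)) ^ m ≤ ((2 : ℝ) ^ ((1 : ℝ) / m)) ^ m := by
          gcongr
          · have : (0 : ℝ) < d - 1 := by
              have : (2 : ℝ) ≤ d := by exact_mod_cast hd
              linarith
            positivity
          · exact one_add_two_div_sub_one_le_of_le hroot_gt hc
      _ = 2 := by rw [one_div, Real.rpow_inv_natCast_pow zero_le_two hm0]
  calc (1 / n) * (1 + 2 / ((d : ℝ) - 1)) ^ m ≤ (1 / n) * 2 := by gcongr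
    _ = 2 / n := by ring

/-- `η₀ < (1/n)(1 + 2/(d-1))^m`, and if `d ≥ (2^{1/m}+1)/(2^{1/m}-1)` then
`η₀ < 2/n`, where `η₀ = wt d m 0 / N` and `N = Σ_{i<n} wt d m i`. -/
theorem stmt_16 (d m n : ℕ) (hd : 2 ≤ d) (hm : 1 ≤ m)
    (hn₁ : 2 ^ (m - 1) < n) (hn₂ : n ≤ 2 ^ m) :
    wt d m 0 / (∑ i ∈ Finset.range n, wt d m i)
        < (1 / n) * (1 + 2 / ((d : ℝ) - 1)) ^ m ∧
      ((((2 : ℝ) ^ ((1 : ℝ) / m) + 1) / ((2 : ℝ) ^ ((1 : ℝ) / m) - 1) ≤ (d : ℝ)) →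
        wt d m 0 / (∑ i ∈ Finset.range n, wt d m i) < 2 / n) :=
  stmt_16_general d m n hd hm hn₁
end
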